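/- Let k ≥ 6 and let G be the graph obtained from the disjoint union of K_{1,k} and K_{k-1} by joining k−1 of the star's leaves to the k−1 vertices of K_{k-1} via a perfect matching and joining the remaining leaf to a vertex of K_{k-1}. Then G is not path-pairable (not k-path-pairable), although it satisfies the cut-condition. -/

import Mathlib

open SimpleGraph
open scoped Classical

/-- A graph `G` (on at least `2k` vertices) is `k`-path-pairable if for every choice of
`2k` pairwise distinct terminals `x 0, …, x (k-1), y 0, …, y (k-1)` there are `k`
pairwise edge-disjoint paths, the `i`-th one joining `x i` to `y i`. -/
def PathPairable {V : Type*} [Fintype V] (G : SimpleGraph V) (k : ℕ) : Prop :=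
  2 * k ≤ Fintype.card V ∧
    ∀ x y : Fin k → V, Function.Injective (Sum.elim x y) →
      ∃ p : (i : Fin k) → G.Walk (x i) (y i),
        (∀ i, (p i).IsPath) ∧
          ∀ i j : Fin k, i ≠ j → List.Disjoint (p i).edges (p j).edges

/-- `edgeCut G S` is `d(S)`: the number of edges of `G` with exactly one endpoint in `S`. -/
noncomputable def edgeCut {V : Type*} [Fintype V] (G : SimpleGraph V) (S : Finset V) : ℕ :=
  (G.edgeSet.toFinite.toFinset.filter fun e => ∃ u v : V, e = s(u, v) ∧ u ∈ S ∧ v ∉ S).card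

/-- `inducedEdges G S` is `e(S)`: the number of edges of `G` with both endpoints in `S`,
i.e. the number of edges of the subgraph of `G` induced on `S`. -/
noncomputable def inducedEdges {V : Type*} [Fintype V] (G : SimpleGraph V) (S : Finset V) : ℕ :=
  (G.edgeSet.toFinite.toFinset.filter fun e => ∃ u v : V, e = s(u, v) ∧ u ∈ S ∧ v ∈ S).card

/-- The graph obtained from the disjoint union of the star `K_{1,k}`
(center `Sum.inl none`, leaves `Sum.inl (some i)`) and the complete graph `K_{k-1}`
(vertices `Sum.inr j`) by matching the leaves `some i` with `i < k-1` to the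
vertices of `K_{k-1}` (leaf `i` to vertex `j` with `(i : ℕ) = (j : ℕ)`) and joining
the remaining leaf (`(i : ℕ) = k-1`) to the vertex `w` of `K_{k-1}`. -/
def starMatchedComplete (k : ℕ) (w : Fin (k - 1)) :
    SimpleGraph (Option (Fin k) ⊕ Fin (k - 1)) :=
  SimpleGraph.fromRel (fun x y =>
    (x = Sum.inl none ∧ ∃ i, y = Sum.inl (some i)) ∨
    (∃ a b : Fin (k - 1), a ≠ b ∧ x = Sum.inr a ∧ y = Sum.inr b) ∨
    (∃ (i : Fin k) (j : Fin (k - 1)), x = Sum.inl (some i) ∧ y = Sum.inr j ∧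
      ((i : ℕ) = (j : ℕ) ∨ ((i : ℕ) = k - 1 ∧ j = w))))

/-!
Pair the centre with the clique vertex `w` and use every other vertex as a terminal. A path
from the centre into the clique enters it through some leaf and so uses both edges of that leaf;
but the leaf is a terminal of another pair, whose path needs one of them.

For the cut condition, count the edges leaving `S` by type. If `S` holds `q` clique vertices,
the clique edges alone contribute `q * (k - 1 - q) ≥ 2 (k - 3) ≥ k` (as `k ≥ 6`) unless
`q ∈ {0, 1, k - 2, k - 1}`, and in those cases the star and matching edges make up the
difference.
-/

open Finset

theorem Finset.card_eq_option_sum {α β : Type*} [Fintype α] [Fintype β] [DecidableEq α]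
    [DecidableEq β] (S : Finset (Option α ⊕ β)) :
    #S = (if Sum.inl none ∈ S then 1 else 0) + #{a | Sum.inl (some a) ∈ S} +
      #{b | Sum.inr b ∈ S} := by
  conv_lhs => rw [← filter_univ_mem S]
  simp only [card_filter, Fintype.sum_sum_type, Fintype.sum_option]

theorem Finset.card_filter_le_card_filter_add {α : Type*} [Fintype α] (p q : α → Prop)
    [DecidablePred p] [DecidablePred q] :
    #{a | p a} ≤ #{a | q a} + #{a | p a ∧ ¬ q a} := by
  refine (card_le_card fun a => ?_).trans (card_union_le _ _)
  simp only [mem_filter, mem_union, mem_univ, true_and]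
  tauto

theorem Finset.ite_le_card_filter_le {α : Type*} [Fintype α] (p : α → Prop) [DecidablePred p]
    (a : α) :
    (if p a then 1 else 0) ≤ #{x | p x} ∧
      #{x | p x} ≤ Fintype.card α - 1 + if p a then 1 else 0 := by
  split_ifs with ha
  · have := card_le_univ ({x | p x} : Finset α)
    exact ⟨card_pos.mpr ⟨a, by simpa using ha⟩, by omega⟩
  · have := card_lt_univ_of_notMem (x := a) (s := {x | p x}) (by simpa using ha)
    exact ⟨Nat.zero_le _, by omega⟩

theorem Equiv.exists_apply_eq_and_apply_eq {α β : Type*} [DecidableEq β] (e : α ≃ β)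
    {a b : α} (hab : a ≠ b) {u v : β} (huv : u ≠ v) :
    ∃ e' : α ≃ β, e' a = u ∧ e' b = v := by
  set e₁ := e.trans (Equiv.swap (e a) u)
  have h₁ : e₁ a = u := by simp [e₁]
  refine ⟨e₁.trans (Equiv.swap (e₁ b) v), ?_, by simp⟩
  have : u ≠ e₁ b := h₁ ▸ e₁.injective.ne hab
  simp [h₁, Equiv.swap_apply_of_ne_of_ne this huv]

theorem edgeCut_eq_card_adj_pairs {V : Type*} [Fintype V] (G : SimpleGraph V) (S : Finset V) :
    edgeCut G S = #{p : V × V | G.Adj p.1 p.2 ∧ p.1 ∈ S ∧ p.2 ∉ S} := by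
  symm
  apply card_nbij (fun p => s(p.1, p.2))
  · rintro ⟨u, v⟩ h
    simp only [coe_filter, mem_univ, true_and, Set.mem_ofPred_eq] at h
    simp only [coe_filter, Set.Finite.mem_toFinset, Set.mem_ofPred_eq, mem_edgeSet]
    exact ⟨h.1, u, v, rfl, h.2⟩
  · rintro ⟨u, v⟩ h ⟨u', v'⟩ h' he
    simp only [coe_filter, mem_univ, true_and, Set.mem_ofPred_eq] at h h'
    rcases Sym2.eq_iff.mp he with ⟨rfl, rfl⟩ | ⟨rfl, rfl⟩
    · rfl
    · exact absurd h.2.1 h'.2.2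
  · rintro e he
    simp only [coe_filter, Set.Finite.mem_toFinset, Set.mem_ofPred_eq] at he
    obtain ⟨hG, u, v, rfl, hu, hv⟩ := he
    exact ⟨(u, v), by simpa using ⟨hG, hu, hv⟩, rfl⟩

/-- On exactly `2 * k` vertices every vertex is a terminal, so each vertex other than `u` and
`v` keeps the first or last edge of its own path. -/
theorem PathPairable.exists_path_with_free_edges {V : Type*} [Fintype V] {G : SimpleGraph V}
    {k : ℕ} (hG : PathPairable G k) (hcard : Fintype.card V = 2 * k) {u v : V} (huv : u ≠ v) :
    ∃ P : G.Walk u v, P.IsPath ∧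
      ∀ z, z ≠ u → z ≠ v → ∃ z', G.Adj z z' ∧ s(z, z') ∉ P.edges := by
  have hk : 0 < k := by
    have := Fintype.one_lt_card_iff_nontrivial.mpr ⟨u, v, huv⟩
    omega
  set i₀ : Fin k := ⟨0, hk⟩
  obtain ⟨e, hu, hv⟩ := (Fintype.equivOfCardEq (by simp [hcard, two_mul])
    : Fin k ⊕ Fin k ≃ V).exists_apply_eq_and_apply_eq Sum.inl_ne_inr huv
  obtain ⟨p, hpath, hdisj⟩ := hG.2 (e ∘ Sum.inl) (e ∘ Sum.inr)
    (by rw [Sum.elim_comp_inl_inr]; exact e.injective)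
  refine ⟨(p i₀).copy hu hv, by simpa using hpath i₀, fun z hzu hzv => ?_⟩
  obtain ⟨t | t, rfl⟩ := e.surjective z
  · have ht : t ≠ i₀ := by rintro rfl; exact hzu hu
    have hnil : ¬ (p t).Nil := Walk.not_nil_of_ne (e.injective.ne Sum.inl_ne_inr)
    exact ⟨(p t).snd, (p t).adj_snd hnil, by
      simpa using hdisj t i₀ ht ((p t).mk_start_snd_mem_edges hnil)⟩
  · have ht : t ≠ i₀ := by rintro rfl; exact hzv hv
    have hnil : ¬ (p t).Nil := Walk.not_nil_of_ne (e.injective.ne Sum.inl_ne_inr)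
    refine ⟨(p t).penultimate, ((p t).adj_penultimate hnil).symm, ?_⟩
    have := hdisj t i₀ ht ((p t).mk_penultimate_end_mem_edges hnil)
    rwa [Sym2.eq_swap, ← Walk.edges_copy (p i₀) hu hv] at this

def leafMate {k : ℕ} (w : Fin (k - 1)) (i : Fin k) : Fin (k - 1) :=
  if h : (i : ℕ) < k - 1 then ⟨i, h⟩ else w

namespace starMatchedComplete

variable {k : ℕ} {w : Fin (k - 1)}

@[simp] lemma adj_center_leaf (i : Fin k) :
    (starMatchedComplete k w).Adj (Sum.inl none) (Sum.inl (some i)) := by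
  simp [starMatchedComplete]

@[simp] lemma not_adj_center_clique (j : Fin (k - 1)) :
    ¬ (starMatchedComplete k w).Adj (Sum.inl none) (Sum.inr j) := by
  simp [starMatchedComplete]

@[simp] lemma not_adj_leaf_leaf (i i' : Fin k) :
    ¬ (starMatchedComplete k w).Adj (Sum.inl (some i)) (Sum.inl (some i')) := by
  simp [starMatchedComplete]

@[simp] lemma adj_leaf_clique (i : Fin k) (j : Fin (k - 1)) :
    (starMatchedComplete k w).Adj (Sum.inl (some i)) (Sum.inr j) ↔ leafMate w i = j := by
  have := i.2
  simp only [starMatchedComplete, fromRel_adj]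
  unfold leafMate
  split_ifs <;> simp <;> simp only [Fin.ext_iff] <;> omega

@[simp] lemma adj_clique_clique (a b : Fin (k - 1)) :
    (starMatchedComplete k w).Adj (Sum.inr a) (Sum.inr b) ↔ a ≠ b := by
  simp [starMatchedComplete, eq_comm]

@[simp] lemma adj_leaf_center (i : Fin k) :
    (starMatchedComplete k w).Adj (Sum.inl (some i)) (Sum.inl none) :=
  (adj_center_leaf i).symm

@[simp] lemma not_adj_clique_center (j : Fin (k - 1)) :
    ¬ (starMatchedComplete k w).Adj (Sum.inr j) (Sum.inl none) :=
  fun h => not_adj_center_clique j h.symm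

@[simp] lemma adj_clique_leaf (j : Fin (k - 1)) (i : Fin k) :
    (starMatchedComplete k w).Adj (Sum.inr j) (Sum.inl (some i)) ↔ leafMate w i = j := by
  rw [adj_comm, adj_leaf_clique]

theorem card_filter_leafMate (P : Fin (k - 1) → Prop) [DecidablePred P] :
    #{i : Fin k | P (leafMate w i)} = #{j | P j} + if P w then 1 else 0 := by
  let g : ℕ → ℕ := fun m =>
    if h : m < k - 1 then (if P ⟨m, h⟩ then 1 else 0) else if P w then 1 else 0
  have hk : 1 ≤ k := by have := w.2; omega
  have h₁ : #{i : Fin k | P (leafMate w i)} = ∑ m ∈ range k, g m := by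
    rw [card_filter, ← Fin.sum_univ_eq_sum_range]
    refine Fintype.sum_congr _ _ fun i => ?_
    simp only [g, leafMate]
    split_ifs <;> rfl
  have h₂ : #{j | P j} = ∑ m ∈ range (k - 1), g m := by
    rw [card_filter, ← Fin.sum_univ_eq_sum_range]
    simp [g]
  rw [h₁, h₂, ← Nat.sub_add_cancel hk, sum_range_succ]
  simp [g]

theorem exists_leaf_forall_adj_mem_edges {b : Fin (k - 1)}
    (P : (starMatchedComplete k w).Walk (Sum.inl none) (Sum.inr b)) (hP : P.IsPath) :
    ∃ i, ∀ z, (starMatchedComplete k w).Adj (Sum.inl (some i)) z →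
      s(Sum.inl (some i), z) ∈ P.edges := by
  obtain ⟨(_ | i) | _, h₁, P₁, rfl⟩ := P.exists_eq_cons_of_ne (by simp)
  · simp at h₁
  · obtain ⟨(_ | _) | j, h₂, P₂, rfl⟩ := P₁.exists_eq_cons_of_ne (by simp)
    -- a path cannot step back to the centre
    · simp [Walk.cons_isPath_iff] at hP
    · simp at h₂
    · refine ⟨i, fun z hz => ?_⟩
      rcases z with (_ | _) | j'
      · simp [Sym2.eq_swap]
      · simp at hz
      · simp only [adj_leaf_clique] at h₂ hz
        simp [← h₂, hz]
  · simp at h₁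

theorem not_pathPairable : ¬ PathPairable (starMatchedComplete k w) k := by
  intro hG
  have hcard : Fintype.card (Option (Fin k) ⊕ Fin (k - 1)) = 2 * k := by
    have := w.2
    simp only [Fintype.card_sum, Fintype.card_option, Fintype.card_fin]
    omega
  obtain ⟨P, hP, hfree⟩ := hG.exists_path_with_free_edges hcard (u := Sum.inl none)
    (v := Sum.inr w) (by simp)
  obtain ⟨i, hi⟩ := exists_leaf_forall_adj_mem_edges P hP
  obtain ⟨z, hz, hzP⟩ := hfree (Sum.inl (some i)) (by simp) (by simp)
  exact hzP (hi z hz)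

theorem edgeCut_eq (S : Finset (Option (Fin k) ⊕ Fin (k - 1))) :
    edgeCut (starMatchedComplete k w) S =
      #{i | Sum.inl none ∈ S ∧ Sum.inl (some i) ∉ S} +
      #{i | Sum.inl (some i) ∈ S ∧ Sum.inl none ∉ S} +
      #{i | Sum.inl (some i) ∈ S ∧ Sum.inr (leafMate w i) ∉ S} +
      #{i | Sum.inr (leafMate w i) ∈ S ∧ Sum.inl (some i) ∉ S} +
      #{p : Fin (k - 1) × Fin (k - 1) | Sum.inr p.1 ∈ S ∧ Sum.inr p.2 ∉ S} := by
  have hclique (a b : Fin (k - 1)) :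
      (if a = b then 0 else if Sum.inr a ∈ S then if Sum.inr b ∈ S then 0 else 1 else 0) =
        if Sum.inr a ∈ S then if Sum.inr b ∈ S then 0 else 1 else 0 := by
    split_ifs <;> simp_all
  rw [edgeCut_eq_card_adj_pairs]
  simp only [card_filter, Fintype.sum_prod_type, Fintype.sum_sum_type, Fintype.sum_option,
    Finset.sum_add_distrib]
  rw [Finset.sum_comm (s := (univ : Finset (Fin (k - 1)))) (t := (univ : Finset (Fin k)))]
  simp [ite_and, hclique]
  ring

-- `a`, `l`, `q` count the centre, leaves and clique vertices in `S`, `u` is `1` iff `w ∈ S`,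
-- and `m₁`, `m₂` count the matching edges leaving `S` through a leaf resp. a clique vertex.
theorem cut_count_le {k a l q u m₁ m₂ : ℕ} (hk : 6 ≤ k) (ha : a ≤ 1) (hS : a + l + q ≤ k)
    (hu : u ≤ 1) (huq : u ≤ q) (hqk : q ≤ k - 2 + u) (hm₁ : l ≤ q + u + m₁)
    (hm₂ : q + u ≤ l + m₂) :
    a + l + q ≤ a * (k - l) + (1 - a) * l + m₁ + m₂ + q * (k - 1 - q) := by
  have h₁ : q ≤ q * (k - 1 - q) ∨ q = k - 1 := by
    rcases Nat.lt_or_ge q (k - 1) with h | h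
    · exact Or.inl (Nat.le_mul_of_pos_right q (by omega))
    · omega
  have h₂ : k - 1 - q ≤ q * (k - 1 - q) ∨ q = 0 := by
    rcases Nat.eq_zero_or_pos q with h | h
    · exact Or.inr h
    · exact Or.inl (Nat.le_mul_of_pos_left _ h)
  interval_cases a <;> omega

theorem card_le_edgeCut (hk : 6 ≤ k) (S : Finset (Option (Fin k) ⊕ Fin (k - 1)))
    (hS : #S ≤ k) : #S ≤ edgeCut (starMatchedComplete k w) S := by
  set l := #{i | Sum.inl (some i) ∈ S}
  set q := #{j | Sum.inr j ∈ S}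
  set u := if Sum.inr w ∈ S then 1 else 0
  have hl : #{i | Sum.inl (some i) ∉ S} = k - l := by
    rw [filter_not, card_univ_sdiff, Fintype.card_fin]
  have hq : #{j | Sum.inr j ∉ S} = k - 1 - q := by
    rw [filter_not, card_univ_sdiff, Fintype.card_fin]
  have hclique : #{p : Fin (k - 1) × Fin (k - 1) | Sum.inr p.1 ∈ S ∧ Sum.inr p.2 ∉ S} =
      q * (k - 1 - q) := by
    rw [← hq, ← card_product, ← filter_product, univ_product_univ]
  have hmates : #{i | Sum.inr (leafMate w i) ∈ S} = q + u :=
    card_filter_leafMate (fun j => Sum.inr j ∈ S)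
  have hm₁ := card_filter_le_card_filter_add (fun i : Fin k => Sum.inl (some i) ∈ S)
    (fun i => Sum.inr (leafMate w i) ∈ S)
  have hm₂ := card_filter_le_card_filter_add (fun i : Fin k => Sum.inr (leafMate w i) ∈ S)
    (fun i => Sum.inl (some i) ∈ S)
  obtain ⟨huq, hqk⟩ := ite_le_card_filter_le (fun j : Fin (k - 1) => Sum.inr j ∈ S) w
  rw [hmates] at hm₁ hm₂
  rw [Fintype.card_fin] at hqk
  rw [card_eq_option_sum] at hS ⊢
  rw [edgeCut_eq, hclique]
  by_cases hc : Sum.inl none ∈ S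
  · simpa [hc, hl] using cut_count_le (a := 1) hk le_rfl (by simpa [hc] using hS)
      (ite_le_one le_rfl zero_le_one) huq (by omega) hm₁ hm₂
  · simpa [hc] using cut_count_le (a := 0) hk zero_le_one (by simpa [hc] using hS)
      (ite_le_one le_rfl zero_le_one) huq (by omega) hm₁ hm₂

end starMatchedComplete

/-- For `k ≥ 6`, the graph obtained from `K_{1,k}` and `K_{k-1}` by the matching
construction is not path-pairable (not `k`-path-pairable), although it satisfies
the cut-condition. -/
theorem starMatchedComplete_not_pathPairable (k : ℕ) (hk : 6 ≤ k) (w : Fin (k - 1)) :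
    ¬ PathPairable (starMatchedComplete k w) k ∧
      ∀ S : Finset (Option (Fin k) ⊕ Fin (k - 1)),
        S.card ≤ k → S.card ≤ edgeCut (starMatchedComplete k w) S :=
  ⟨starMatchedComplete.not_pathPairable, starMatchedComplete.card_le_edgeCut hk⟩
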